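/- arXiv:math/0412447 — 4 statements merged into one kernel-verified Lean document; each statement's English description precedes it below -/
import Mathlib

section
/- Let τ ∈ ℝ/ℤ, n a positive integer, and σ < 1/3. If ‖i·τ‖ ≤ σ for all i = 1, …, n (where ‖x‖ denotes the distance from a representative of x to the nearest integer), then ‖τ‖ ≤ σ/n. -/
/-!
Lift `τ` to its nearest representative `t`, so that `‖τ‖ = |t|`. A real `x` with
`‖x‖ < p - |x|` in `ℝ/pℤ` is its own nearest representative, since every other representative
of its class lies at distance at least `p - |x|` from it. Induct on `k ≤ n`: once `|k t| ≤ σ`,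
we get `|(k+1) t| ≤ 2σ` while `‖(k+1) τ‖ ≤ σ`, and as `3σ < 1` this forces
`|(k+1) t| = ‖(k+1) τ‖ ≤ σ`. Hence `n ‖τ‖ = |n t| ≤ σ`.
-/

namespace AddCircle

variable {p : ℝ}

theorem exists_coe_eq_and_norm_eq_abs (τ : AddCircle p) :
    ∃ t : ℝ, (t : AddCircle p) = τ ∧ ‖τ‖ = |t| := by
  induction τ using QuotientAddGroup.induction_on with | H x => ?_
  refine ⟨x - round (p⁻¹ * x) * p, ?_, norm_eq p⟩
  rw [coe_sub, ← zsmul_eq_mul, coe_zsmul, coe_period, smul_zero, sub_zero]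

theorem norm_coe_eq_abs_of_abs_add_norm_lt {x : ℝ} (h : |x| + ‖(x : AddCircle p)‖ < p) :
    ‖(x : AddCircle p)‖ = |x| := by
  rw [norm_eq] at h ⊢
  set m := round (p⁻¹ * x)
  obtain hm | hm := eq_or_ne m 0
  · simp [hm]
  have hmp : p ≤ |m * p| := by
    rw [abs_mul]
    have : (1 : ℝ) ≤ |(m : ℝ)| := by exact_mod_cast Int.one_le_abs hm
    exact (le_abs_self p).trans (le_mul_of_one_le_left (abs_nonneg p) this)
  linarith [abs_sub_abs_le_abs_sub (m * p) x, abs_sub_comm x (m * p)]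

theorem abs_nsmul_le_of_norm_coe_nsmul_le {t σ : ℝ} (hσ : 3 * σ < p) (ht : |t| ≤ σ) :
    ∀ n : ℕ, (∀ i : ℕ, 1 ≤ i → i ≤ n → ‖((i • t : ℝ) : AddCircle p)‖ ≤ σ) → |n • t| ≤ σ
  | 0, _ => by simpa using (abs_nonneg t).trans ht
  | n + 1, h => by
    have ih := abs_nsmul_le_of_norm_coe_nsmul_le hσ ht n fun i hi hin => h i hi (by omega)
    have hnext := h (n + 1) (by omega) le_rfl
    have hsum : |(n + 1) • t| ≤ 2 * σ := by
      rw [succ_nsmul]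
      linarith [abs_add_le (n • t) t]
    rwa [← norm_coe_eq_abs_of_abs_add_norm_lt (p := p) (x := (n + 1) • t) (by linarith)]

end AddCircle

/-- If `‖i • τ‖ ≤ σ < 1/3` for all `i = 1, …, n`, then `‖τ‖ ≤ σ / n`. -/
theorem norm_le_of_multiples_small (τ : AddCircle (1:ℝ)) (n : ℕ) (hn : 0 < n)
    (σ : ℝ) (hσ : σ < 1/3)
    (h : ∀ i : ℕ, 1 ≤ i → i ≤ n → ‖i • τ‖ ≤ σ) :
    ‖τ‖ ≤ σ / n := by
  obtain ⟨t, rfl, hτ⟩ := AddCircle.exists_coe_eq_and_norm_eq_abs τ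
  have ht : |t| ≤ σ := by simpa [hτ] using h 1 le_rfl hn
  have hnt := AddCircle.abs_nsmul_le_of_norm_coe_nsmul_le (p := 1) (by linarith) ht n
    fun i hi hin => by rw [AddCircle.coe_nsmul]; exact h i hi hin
  rw [nsmul_eq_mul, abs_mul, Nat.abs_cast] at hnt
  rw [hτ, le_div_iff₀ (by exact_mod_cast hn), mul_comm]
  exact hnt
end

section
/- Let H be a countable subgroup of 𝕋 = ℝ/ℤ admitting a characterizing sequence, and let (m_n) be an arbitrary strictly increasing sequence of positive integers. Then there exists a strictly increasing sequence (k_n) of positive integers characterizing H with k_n > m_n for all n. (A sequence (k_n) characterizes H iff for all α ∈ 𝕋: α ∈ H ⟺ ‖k_n α‖ → 0.) -/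
/-- A sequence of positive integers `k` characterizes the subgroup `H ≤ 𝕋` if
`α ∈ H ↔ ‖kₙ α‖ → 0`. -/
def Characterizes (k : ℕ → ℕ) (H : AddSubgroup (AddCircle (1:ℝ))) : Prop :=
  ∀ α : AddCircle (1:ℝ),
    α ∈ H ↔ Filter.Tendsto (fun n => ‖k n • α‖) Filter.atTop (nhds 0)

/-!
Enumerate `H = {h₀, h₁, …}` and choose, recursively, integers `b p` as large as we like with
`‖b p • hₗ‖ < 1 / (p + 1)` for all `l ≤ p` (a large multiple of a term of `c` that is small enough
on `h₀, …, hₚ`). Then `k = b 0, b 0 + c 0, b 1, b 1 + c 1, …` works: on `H` both `b p • α` and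
`c p • α` tend to `0`, while conversely `c p • α` is the difference of two consecutive
terms `k n • α`, so `‖k n • α‖ → 0` forces `‖c p • α‖ → 0`, i.e. `α ∈ H`.
-/

open Filter Topology

/-- The sequence `b 0, b 0 + c 0, b 1, b 1 + c 1, …`. -/
def interleave (b c : ℕ → ℕ) (n : ℕ) : ℕ :=
  b (n / 2) + n % 2 * c (n / 2)

section Interleave

variable {b c : ℕ → ℕ}

@[simp]
lemma interleave_two_mul (p : ℕ) : interleave b c (2 * p) = b p := by
  simp [interleave]

@[simp]
lemma interleave_two_mul_add_one (p : ℕ) : interleave b c (2 * p + 1) = b p + c p := by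
  simp [interleave, Nat.add_div, Nat.add_mod]

lemma strictMono_interleave (hc : ∀ p, 0 < c p) (hbc : ∀ p, b p + c p < b (p + 1)) :
    StrictMono (interleave b c) := by
  refine strictMono_nat_of_lt_succ fun n => ?_
  obtain ⟨p, rfl | rfl⟩ := Nat.even_or_odd' n
  · simpa using hc p
  · simpa [show 2 * p + 1 + 1 = 2 * (p + 1) by ring] using hbc p

lemma lt_interleave {m : ℕ → ℕ} (hb : ∀ p, max (m (2 * p)) (m (2 * p + 1)) < b p) (n : ℕ) :
    m n < interleave b c n := by
  obtain ⟨p, rfl | rfl⟩ := Nat.even_or_odd' n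
  · simpa using (le_max_left _ _).trans_lt (hb p)
  · simpa using ((le_max_right _ _).trans_lt (hb p)).trans_le (Nat.le_add_right _ _)

variable {E : Type*} [SeminormedAddCommGroup E] {x : E}

lemma tendsto_norm_interleave_nsmul (hb : Tendsto (fun p => ‖b p • x‖) atTop (𝓝 0))
    (hc : Tendsto (fun p => ‖c p • x‖) atTop (𝓝 0)) :
    Tendsto (fun n => ‖interleave b c n • x‖) atTop (𝓝 0) := by
  have hsum := (hb.add hc).comp (Nat.tendsto_div_const_atTop two_ne_zero)
  rw [add_zero] at hsum
  refine squeeze_zero (fun _ => norm_nonneg _) (fun n => ?_) hsum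
  obtain ⟨p, rfl | rfl⟩ := Nat.even_or_odd' n
  · simp
  · simpa [add_nsmul, Nat.add_div] using norm_add_le (b p • x) (c p • x)

lemma tendsto_norm_nsmul_of_interleave
    (h : Tendsto (fun n => ‖interleave b c n • x‖) atTop (𝓝 0)) :
    Tendsto (fun p => ‖c p • x‖) atTop (𝓝 0) := by
  have hodd := h.comp (strictMono_id.const_mul two_pos |>.add_const 1).tendsto_atTop
  have heven := h.comp (strictMono_id.const_mul two_pos).tendsto_atTop
  have hsum := hodd.add heven
  rw [add_zero] at hsum
  refine squeeze_zero (fun _ => norm_nonneg _) (fun p => ?_) hsum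
  simpa [add_nsmul] using norm_sub_le ((b p + c p) • x) (b p • x)

end Interleave

section AlmostAnnihilating

variable {E : Type*} [SeminormedAddCommGroup E] {c : ℕ → ℕ}

lemma exists_lt_forall_norm_nsmul_lt (hc0 : ∀ n, 0 < c n) {ι : Type*} {s : Finset ι}
    {x : ι → E} (hs : ∀ i ∈ s, Tendsto (fun n => ‖c n • x i‖) atTop (𝓝 0)) (M : ℕ)
    {ε : ℝ} (hε : 0 < ε) :
    ∃ b, M < b ∧ ∀ i ∈ s, ‖b • x i‖ < ε := by
  have hM : (0 : ℝ) < M + 1 := by positivity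
  have hev : ∀ᶠ n in atTop, ∀ i ∈ s, ‖c n • x i‖ < ε / (M + 1) :=
    (eventually_all_finset s).2 fun i hi => (hs i hi).eventually_lt_const (div_pos hε hM)
  obtain ⟨J, hJ⟩ := hev.exists
  refine ⟨(M + 1) * c J, by nlinarith [hc0 J], fun i hi => ?_⟩
  calc ‖((M + 1) * c J) • x i‖ = ‖(M + 1) • c J • x i‖ := by rw [mul_nsmul']
    _ ≤ (M + 1) * ‖c J • x i‖ := by exact_mod_cast norm_nsmul_le (n := M + 1) (a := c J • x i)
    _ < (M + 1) * (ε / (M + 1)) := by gcongr; exact hJ i hi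
    _ = ε := by field_simp

lemma exists_seq_forall_tendsto_norm_nsmul (hc0 : ∀ n, 0 < c n) {S : Set E} (hS : S.Countable)
    (hSc : ∀ x ∈ S, Tendsto (fun n => ‖c n • x‖) atTop (𝓝 0)) (M : ℕ → ℕ) :
    ∃ b : ℕ → ℕ, (∀ p, M p < b p) ∧ (∀ p, b p + c p < b (p + 1)) ∧
      ∀ x ∈ S, Tendsto (fun p => ‖b p • x‖) atTop (𝓝 0) := by
  obtain ⟨e, he⟩ := (hS.insert 0).exists_eq_range (Set.insert_nonempty 0 S)
  have hec : ∀ l, Tendsto (fun n => ‖c n • e l‖) atTop (𝓝 0) := by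
    intro l
    rcases (he ▸ Set.mem_range_self l : e l ∈ insert 0 S) with h0 | hS
    · simp [h0]
    · exact hSc _ hS
  have step (p N : ℕ) : ∃ b, N < b ∧ ∀ l ≤ p, ‖b • e l‖ < 1 / (p + 1) := by
    simpa using exists_lt_forall_norm_nsmul_lt hc0 (s := Finset.Iic p) (fun l _ => hec l) N
      (by positivity : (0 : ℝ) < 1 / (p + 1))
  choose f hfN hfe using step
  let b : ℕ → ℕ := fun p =>
    Nat.rec (f 0 (M 0)) (fun p bp => f (p + 1) (M (p + 1) + (bp + c p))) p
  refine ⟨b, ?_, fun p => (Nat.le_add_left _ _).trans_lt (hfN (p + 1) _), ?_⟩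
  · rintro (_ | p)
    · exact hfN 0 _
    · exact (Nat.le_add_right _ _).trans_lt (hfN (p + 1) _)
  · intro x hx
    obtain ⟨L, rfl⟩ : x ∈ Set.range e := he ▸ Set.mem_insert_of_mem 0 hx
    refine squeeze_zero' (.of_forall fun _ => norm_nonneg _) ?_
      tendsto_one_div_add_atTop_nhds_zero_nat
    filter_upwards [eventually_ge_atTop L] with p hp
    cases p <;> exact (hfe _ _ L hp).le

end AlmostAnnihilating

theorem exists_sparse_characterizing_sequence_general
    (H : AddSubgroup (AddCircle (1:ℝ))) (hH : (H : Set (AddCircle (1:ℝ))).Countable)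
    (c : ℕ → ℕ) (hc0 : ∀ n, 0 < c n) (hc : Characterizes c H)
    (m : ℕ → ℕ) :
    ∃ k : ℕ → ℕ, StrictMono k ∧ (∀ n, 0 < k n) ∧ (∀ n, m n < k n) ∧
      Characterizes k H := by
  obtain ⟨b, hmb, hbc, hbH⟩ := exists_seq_forall_tendsto_norm_nsmul hc0 hH
    (fun x hx => (hc x).1 hx) fun p => max (m (2 * p)) (m (2 * p + 1))
  have hmk : ∀ n, m n < interleave b c n := lt_interleave hmb
  refine ⟨interleave b c, strictMono_interleave hc0 hbc,
    fun n => (Nat.zero_le _).trans_lt (hmk n), hmk, fun α => ⟨fun hα => ?_, fun hk => (hc α).2 (tendsto_norm_nsmul_of_interleave hk)⟩⟩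
  exact tendsto_norm_interleave_nsmul (hbH α hα) ((hc α).1 hα)

/-- Characterizing sequences of a countable subgroup of `𝕋` can be made
arbitrarily sparse: given any strictly increasing sequence `(mₙ)` there is a
strictly increasing characterizing sequence `(kₙ)` with `kₙ > mₙ`. -/
theorem exists_sparse_characterizing_sequence
    (H : AddSubgroup (AddCircle (1:ℝ))) (hH : (H : Set (AddCircle (1:ℝ))).Countable)
    (c : ℕ → ℕ) (hc0 : ∀ n, 0 < c n) (hc : Characterizes c H)
    (m : ℕ → ℕ) (hm : StrictMono m) (hm0 : ∀ n, 0 < m n) :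
    ∃ k : ℕ → ℕ, StrictMono k ∧ (∀ n, 0 < k n) ∧ (∀ n, m n < k n) ∧
      Characterizes k H :=
  exists_sparse_characterizing_sequence_general H hH c hc0 hc m
end

section
/- Let (k_n) be a strictly increasing sequence of positive integers with k_n ≥ n^n for all n. Then sup_n k_{n+1}/k_n = ∞, i.e., the quotients k_{n+1}/k_n are unbounded. -/
/-! If the quotients were bounded by `D`, then `kₙ ≤ D^(n-1) k₁` would grow only
geometrically, which `nⁿ ≤ kₙ` forbids. -/

open Filter

/-- Beyond `max (2C) a` one has `a * Cⁿ < 2ⁿ Cⁿ = (2C)ⁿ ≤ nⁿ`. -/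
theorem eventually_mul_pow_lt_pow_self (a : ℝ) {C : ℝ} (hC : 0 < C) :
    ∀ᶠ n : ℕ in atTop, a * C ^ n < (n : ℝ) ^ n := by
  filter_upwards [eventually_ge_atTop ⌈2 * C⌉₊, eventually_gt_atTop ⌈a⌉₊] with n h2C ha
  have ha_lt : a < 2 ^ n :=
    (Nat.lt_of_ceil_lt ha).trans (by exact_mod_cast Nat.lt_two_pow_self)
  calc a * C ^ n < 2 ^ n * C ^ n := by gcongr
    _ = (2 * C) ^ n := (mul_pow _ _ _).symm
    _ ≤ (n : ℝ) ^ n := by gcongr; exact Nat.ceil_le.1 h2C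

theorem quotients_unbounded_of_superexp_general
    (k : ℕ → ℕ)
    (hkn : ∀ n, 1 ≤ n → (n : ℕ)^n ≤ k n) :
    ∀ C : ℝ, ∃ n : ℕ, C < (k (n+1) : ℝ) / (k n : ℝ) := by
  intro C
  by_contra! hbound
  set D := max C 1
  have hD : 0 < D := one_pos.trans_le (le_max_right _ _)
  have hkn_real : ∀ n, ((n + 1 : ℕ) : ℝ) ^ (n + 1) ≤ k (n + 1) := fun n => by
    exact_mod_cast hkn (n + 1) (Nat.le_add_left 1 n)
  have hpos : ∀ n, (0 : ℝ) < k (n + 1) := fun n =>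
    (by positivity : (0 : ℝ) < _).trans_le (hkn_real n)
  -- `k 0` may vanish, so the ratio bound is only used from index `1` on.
  have hgeom : ∀ n, (k (n + 1) : ℝ) ≤ D ^ n * k 1 := fun n =>
    le_geom hD.le n fun m _ => (div_le_iff₀ (hpos m)).1 ((hbound (m + 1)).trans (le_max_left _ _))
  obtain ⟨n, hlt, hn1⟩ :=
    ((eventually_mul_pow_lt_pow_self (k 1 / D) hD).and (eventually_ge_atTop 1)).exists
  obtain ⟨m, rfl⟩ := Nat.exists_eq_add_of_le' hn1
  have hsplit : (k 1 / D) * D ^ (m + 1) = D ^ m * k 1 := by field_simp; ring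
  linarith [hlt, hkn_real m, hgeom m]

/-- If `(kₙ)` is strictly increasing with `kₙ ≥ nⁿ` (and `kₙ > 0`), then the
quotients `k_{n+1}/kₙ` are unbounded. -/
theorem quotients_unbounded_of_superexp
    (k : ℕ → ℕ) (hk : StrictMono k) (hk0 : ∀ n, 0 < k n)
    (hkn : ∀ n, 1 ≤ n → (n : ℕ)^n ≤ k n) :
    ∀ C : ℝ, ∃ n : ℕ, C < (k (n+1) : ℝ) / (k n : ℝ) :=
  quotients_unbounded_of_superexp_general k hkn
end

section
/- Let α, β ∈ 𝕋 = ℝ/ℤ be such that lifts of α and β together with 1 are linearly independent over ℚ. Then there exists a sequence (c_n) of integers with c_n α → β in 𝕋 while (c_n γ) diverges for every γ ∈ 𝕋 \ ⟨α⟩. Consequently, the embedding ι : ℤ → 𝕋, n ↦ nα, gives a compactification of ℤ in which ι(c_n) → β with ⟨β⟩ ∩ ι(ℤ) = {0}, yet there is no infinite subgroup A ≤ 𝕋 with c_n γ → 0 for all γ ∈ A. -/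
/-!
Let `p/q` run through the continued fraction convergents of `a`, with errors `e = q a - p`, so
that `q α = e` in `𝕋`, the errors tend to `0`, and `A |e'| ≤ |e|` when `A` is the next partial
quotient and `e'` the next error. The integers `round (b / e) q + j q'`, `0 ≤ j ≤ A`, move `α`
to within `2 |e|` of `β`; listing all of them stage by stage gives `(cₙ)` with `cₙ α → β`.

If `cₙ γ` converges, the differences `j q' γ` tend to `0` uniformly in `j ≤ A`, so `A ‖q' γ‖`
becomes small. For a lift `g` of `γ`, the nearest integers `m` to `q g` then eventually obey the
recurrence of the convergents, whence `m = k q + l p` and `q (g - k - l a)` stays bounded while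
`q → ∞`: `γ = l α`. Rational independence of `1, a, b` gives the rest: `⟨α⟩ ∩ ⟨β⟩ = 0`, and if
`cₙ (j α) → 0` then `j β = 0`, so `j = 0`.
-/

open Filter Topology

lemma Sigma.comap_fst_cofinite {ι : Type*} {β : ι → Type*} [∀ i, Finite (β i)] :
    comap (Sigma.fst : (Σ i, β i) → ι) cofinite = cofinite :=
  (comap_cofinite_le _).antisymm (Tendsto.cofinite_of_finite_preimage_singleton fun i => by
    rw [← Set.range_sigmaMk]; infer_instance).le_comap

lemma eq_zero_of_tendsto_zsmul {G ι : Type*} [AddCommGroup G] [TopologicalSpace G]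
    [ContinuousConstSMul ℤ G] [T2Space G] {l : Filter ι} [l.NeBot] {c : ι → ℤ} {α β γ : G}
    (hβ : ∀ j : ℤ, j • β = 0 → j = 0) (hα : Tendsto (fun i => c i • α) l (𝓝 β))
    (hγ : γ ∈ AddSubgroup.zmultiples α) (h0 : Tendsto (fun i => c i • γ) l (𝓝 0)) : γ = 0 := by
  obtain ⟨j, rfl⟩ := AddSubgroup.mem_zmultiples_iff.mp hγ
  have hj : Tendsto (fun i => c i • j • α) l (𝓝 (j • β)) := by
    simpa only [smul_comm j] using hα.const_smul j
  rw [hβ j (tendsto_nhds_unique hj h0), zero_zsmul]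

@[simp]
lemma UnitAddCircle.coe_intCast (z : ℤ) : ((z : ℝ) : UnitAddCircle) = 0 := by
  simp only [QuotientAddGroup.eq_zero_iff, AddSubgroup.intCast_mem_zmultiples_one]

lemma UnitAddCircle.mul_norm_le_of_forall_norm_nsmul_le {γ : UnitAddCircle} {ε : ℝ} {A : ℕ}
    (hε : ε ≤ 1 / 4) (h : ∀ j ≤ A, ‖j • γ‖ ≤ ε) : A * ‖γ‖ ≤ ε := by
  obtain ⟨x, rfl⟩ := QuotientAddGroup.mk_surjective γ
  set δ := x - round x
  have hγ : (x : UnitAddCircle) = δ := by simp [δ]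
  have hnorm : ‖(x : UnitAddCircle)‖ = |δ| := UnitAddCircle.norm_eq
  rw [hnorm]
  suffices ∀ j ≤ A, j * |δ| ≤ ε from this A le_rfl
  intro j hj
  induction j with
  | zero => simpa using (norm_nonneg _).trans (h 0 (Nat.zero_le _))
  | succ j ih =>
    have hδ : |δ| ≤ ε := by simpa [hnorm] using h 1 (by omega)
    -- `j |δ|` and `|δ|` are at most `ε ≤ 1/4`, so `(j + 1) δ` stays in `[-1/2, 1/2]`.
    have hsmall : |(j + 1 : ℕ) * δ| ≤ |(1 : ℝ)| / 2 := by
      rw [abs_mul, Nat.abs_cast]; push_cast; linarith [ih (by omega)]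
    have := h (j + 1) hj
    rwa [hγ, ← AddCircle.coe_nsmul, nsmul_eq_mul,
      (AddCircle.norm_coe_eq_abs_iff (p := 1) one_ne_zero).mpr hsmall,
      abs_mul, Nat.abs_cast] at this

namespace GaussCF

variable (a : ℝ)

noncomputable def rem : ℕ → ℝ
  | 0 => Int.fract a
  | n + 1 => (rem n)⁻¹ - ⌊(rem n)⁻¹⌋₊

noncomputable def quot (n : ℕ) : ℕ := ⌊(rem a n)⁻¹⌋₊

-- Shifted by one from the classical `q₋₁ = 0, q₀ = 1`: `den a (n + 1)` is the `n`-th denominator.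
noncomputable def den : ℕ → ℤ
  | 0 => 0
  | 1 => 1
  | n + 2 => quot a n * den (n + 1) + den n

noncomputable def num : ℕ → ℤ
  | 0 => 1
  | 1 => ⌊a⌋
  | n + 2 => quot a n * num (n + 1) + num n

noncomputable def err (n : ℕ) : ℝ := den a n * a - num a n

lemma rem_succ (n : ℕ) : rem a (n + 1) = (rem a n)⁻¹ - quot a n := rfl

lemma den_add_two (n : ℕ) : den a (n + 2) = quot a n * den a (n + 1) + den a n := rfl

lemma num_add_two (n : ℕ) : num a (n + 2) = quot a n * num a (n + 1) + num a n := rfl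

lemma err_add_two (n : ℕ) : err a (n + 2) = quot a n * err a (n + 1) + err a n := by
  simp only [err, den_add_two, num_add_two]; push_cast; ring

lemma den_mul_num_succ_sub (n : ℕ) :
    den a n * num a (n + 1) - num a n * den a (n + 1) = (-1) ^ (n + 1) := by
  induction n with
  | zero => simp [den, num]
  | succ n ih => rw [den_add_two, num_add_two, pow_succ, ← ih]; ring

lemma den_mul_err_succ_sub (n : ℕ) :
    den a n * err a (n + 1) - den a (n + 1) * err a n = (-1) ^ n := by
  have h := congrArg (fun z : ℤ => (z : ℝ)) (den_mul_num_succ_sub a n)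
  simp only [err]; push_cast at h ⊢; rw [pow_succ] at h; linarith

lemma den_nonneg : ∀ n, 0 ≤ den a n
  | 0 => le_rfl
  | 1 => zero_le_one
  | n + 2 => by
    have := den_nonneg n
    have := den_nonneg (n + 1)
    rw [den_add_two]; positivity

variable {a}

lemma irrational_rem (ha : Irrational a) : ∀ n, Irrational (rem a n)
  | 0 => by rw [rem, ← Int.self_sub_floor]; exact ha.sub_intCast _
  | n + 1 => (irrational_rem ha n).inv.sub_natCast _

lemma rem_mem_Ioo (ha : Irrational a) (n : ℕ) : rem a n ∈ Set.Ioo 0 1 := by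
  refine ⟨(irrational_rem ha n).ne_zero.symm.lt_of_le ?_, ?_⟩
  · induction n with
    | zero => exact Int.fract_nonneg a
    | succ n ih => exact sub_nonneg.mpr (Nat.floor_le (inv_nonneg.mpr ih))
  · cases n with
    | zero => exact Int.fract_lt_one a
    | succ n => rw [rem_succ, quot, sub_lt_iff_lt_add']; exact Nat.lt_floor_add_one _

lemma one_le_quot (ha : Irrational a) (n : ℕ) : 1 ≤ quot a n := by
  obtain ⟨h0, h1⟩ := rem_mem_Ioo ha n
  exact Nat.le_floor (by simpa using (one_le_inv₀ h0).mpr h1.le)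

lemma quot_mul_rem_le_one (ha : Irrational a) (n : ℕ) : quot a n * rem a n ≤ 1 := by
  have h0 := (rem_mem_Ioo ha n).1
  calc quot a n * rem a n ≤ (rem a n)⁻¹ * rem a n := by
        gcongr; exact Nat.floor_le (inv_nonneg.mpr h0.le)
    _ = 1 := inv_mul_cancel₀ h0.ne'

lemma err_succ (ha : Irrational a) (n : ℕ) : err a (n + 1) = -rem a n * err a n := by
  induction n with
  | zero =>
    simp only [err, den, num, rem, ← Int.self_sub_floor]
    push_cast; ring
  | succ n ih =>
    have h0 := (rem_mem_Ioo ha n).1.ne'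
    rw [err_add_two, rem_succ, ih]
    field_simp
    ring

lemma abs_err_succ (ha : Irrational a) (n : ℕ) : |err a (n + 1)| = rem a n * |err a n| := by
  rw [err_succ ha, abs_mul, abs_neg, abs_of_pos (rem_mem_Ioo ha n).1]

lemma err_ne_zero (ha : Irrational a) : ∀ n, err a n ≠ 0
  | 0 => by simp [err, den, num]
  | n + 1 => by
    rw [err_succ ha]
    exact mul_ne_zero (neg_ne_zero.mpr (rem_mem_Ioo ha n).1.ne') (err_ne_zero ha n)

lemma quot_mul_abs_err_succ_le (ha : Irrational a) (n : ℕ) :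
    quot a n * |err a (n + 1)| ≤ |err a n| := by
  rw [abs_err_succ ha, ← mul_assoc]
  exact mul_le_of_le_one_left (abs_nonneg _) (quot_mul_rem_le_one ha n)

lemma fib_le_den (ha : Irrational a) : ∀ n, (Nat.fib n : ℤ) ≤ den a n
  | 0 => by simp [den]
  | 1 => by simp [den]
  | n + 2 => by
    have h1 := fib_le_den ha n
    have h2 := fib_le_den ha (n + 1)
    have hq : (1 : ℤ) ≤ quot a n := by exact_mod_cast one_le_quot ha n
    rw [Nat.fib_add_two, den_add_two]; push_cast
    nlinarith [(Nat.fib (n + 1)).cast_nonneg (α := ℤ)]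

lemma one_le_den_succ (ha : Irrational a) (n : ℕ) : 1 ≤ den a (n + 1) :=
  le_trans (by exact_mod_cast Nat.fib_pos.mpr n.succ_pos) (fib_le_den ha (n + 1))

lemma tendsto_den (ha : Irrational a) : Tendsto (fun n => (den a n : ℝ)) atTop atTop := by
  have hfib : Tendsto (fun n => (Nat.fib (n + 2) : ℝ)) atTop atTop :=
    tendsto_natCast_atTop_atTop.comp Nat.fib_add_two_strictMono.tendsto_atTop
  refine (tendsto_add_atTop_iff_nat 2).mp (tendsto_atTop_mono (fun n => ?_) hfib)
  exact_mod_cast fib_le_den ha (n + 2)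

lemma den_succ_mul_abs_err_le_one (ha : Irrational a) (n : ℕ) :
    den a (n + 1) * |err a n| ≤ 1 := by
  have hr := (rem_mem_Ioo ha n).1.le
  have hd : (0 : ℝ) ≤ den a n := by exact_mod_cast den_nonneg a n
  have hdet := den_mul_err_succ_sub a n
  rw [err_succ ha] at hdet
  have hd' : (0 : ℝ) ≤ den a (n + 1) := by exact_mod_cast den_nonneg a (n + 1)
  have h : |err a n| * (den a n * rem a n + den a (n + 1)) = 1 := by
    rw [← abs_of_nonneg (by positivity : (0 : ℝ) ≤ den a n * rem a n + den a (n + 1)),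
      ← abs_mul, show err a n * (den a n * rem a n + den a (n + 1)) = -(-1) ^ n by
        linear_combination -hdet]
    simp
  nlinarith [abs_nonneg (err a n), mul_nonneg hd hr]

lemma tendsto_err (ha : Irrational a) : Tendsto (err a) atTop (𝓝 0) := by
  refine squeeze_zero_norm (fun n => ?_)
    (tendsto_inv_atTop_zero.comp ((tendsto_den ha).comp (tendsto_add_atTop_nat 1)))
  have hpos : (0 : ℝ) < den a (n + 1) := by exact_mod_cast one_le_den_succ ha n
  show |err a n| ≤ ((den a (n + 1) : ℝ))⁻¹
  rw [← one_div, le_div_iff₀ hpos, mul_comm]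
  exact den_succ_mul_abs_err_le_one ha n

lemma abs_err_le_one (ha : Irrational a) (n : ℕ) : |err a n| ≤ 1 := by
  have h1 : (1 : ℝ) ≤ den a (n + 1) := by exact_mod_cast one_le_den_succ ha n
  nlinarith [den_succ_mul_abs_err_le_one ha n, abs_nonneg (err a n)]

lemma den_zsmul_coe (n : ℕ) : den a n • (a : UnitAddCircle) = (err a n : UnitAddCircle) := by
  rw [err, AddCircle.coe_sub, ← zsmul_eq_mul, AddCircle.coe_zsmul]
  simp

lemma exists_eq_den_num_of_recurrence {m : ℕ → ℤ} {N : ℕ}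
    (hm : ∀ n ≥ N, m (n + 2) = quot a n * m (n + 1) + m n) :
    ∃ k l : ℤ, ∀ n ≥ N, m n = k * den a n + l * num a n := by
  set s : ℤ := (-1) ^ (N + 1)
  have hs : s * s = 1 := by rw [← pow_add, ← two_mul, pow_mul]; norm_num
  have hdet : den a N * num a (N + 1) - num a N * den a (N + 1) = s := den_mul_num_succ_sub a N
  set k := s * (m N * num a (N + 1) - num a N * m (N + 1))
  set l := s * (den a N * m (N + 1) - m N * den a (N + 1))
  have key : ∀ n ≥ N, m n = k * den a n + l * num a n ∧
      m (n + 1) = k * den a (n + 1) + l * num a (n + 1) := by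
    intro n hn
    induction n, hn using Nat.le_induction with
    | base =>
      exact ⟨by linear_combination (-m N * s) * hdet - m N * hs,
        by linear_combination (-m (N + 1) * s) * hdet - m (N + 1) * hs⟩
    | succ n hn ih =>
      refine ⟨ih.2, ?_⟩
      rw [hm n hn, den_add_two, num_add_two, ih.1, ih.2]
      ring
  exact ⟨k, l, fun n hn => (key n hn).1⟩

lemma eq_zero_of_forall_abs_den_mul_le (ha : Irrational a) {d C : ℝ} {N : ℕ}
    (h : ∀ n ≥ N, |den a n * d| ≤ C) : d = 0 := by
  have hlim : Tendsto (fun n => C / den a n) atTop (𝓝 0) :=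
    tendsto_const_nhds.div_atTop (tendsto_den ha)
  refine abs_nonpos_iff.mp (ge_of_tendsto hlim (eventually_atTop.mpr ⟨N + 1, fun n hn => ?_⟩))
  obtain ⟨k, rfl⟩ : ∃ k, n = k + 1 := ⟨n - 1, by omega⟩
  have hpos : (0 : ℝ) < den a (k + 1) := by exact_mod_cast one_le_den_succ ha k
  rw [le_div_iff₀ hpos, mul_comm, ← abs_of_pos hpos, ← abs_mul]
  exact h (k + 1) (by omega)

lemma recurrence_of_abs_den_mul_sub_le {g : ℝ} {m : ℕ → ℤ} {N : ℕ}
    (hx : ∀ n ≥ N, |den a n * g - m n| ≤ 1 / 5)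
    (hAx : ∀ n ≥ N, quot a n * |den a (n + 1) * g - m (n + 1)| ≤ 1 / 5) :
    ∀ n ≥ N, m (n + 2) = quot a n * m (n + 1) + m n := by
  intro n hn
  set x : ℕ → ℝ := fun i => den a i * g - m i
  have hE : ((m (n + 2) - quot a n * m (n + 1) - m n : ℤ) : ℝ) =
      quot a n * x (n + 1) + x n - x (n + 2) := by
    simp only [x, den_add_two]; push_cast; ring
  have hlt : |((m (n + 2) - quot a n * m (n + 1) - m n : ℤ) : ℝ)| < 1 := by
    have hA := hAx n hn
    rw [← abs_of_nonneg (Nat.cast_nonneg (α := ℝ) (quot a n)), ← abs_mul] at hA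
    rw [hE]
    calc _ ≤ |quot a n * x (n + 1)| + |x n| + |x (n + 2)| := by
          simpa [← sub_eq_add_neg] using abs_add_three (quot a n * x (n + 1)) (x n) (-x (n + 2))
      _ < 1 := by linarith [hx n hn, hx (n + 2) (by omega)]
  have := Int.abs_lt_one_iff.mp (by exact_mod_cast hlt)
  linarith

theorem mem_zmultiples_of_forall_norm_zsmul_le (ha : Irrational a) (γ : UnitAddCircle)
    (H : ∀ ε > 0, ∀ᶠ n in atTop, ∀ j ≤ quot a n, ‖(j * den a (n + 1)) • γ‖ ≤ ε) :
    γ ∈ AddSubgroup.zmultiples (a : UnitAddCircle) := by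
  obtain ⟨g, rfl⟩ := QuotientAddGroup.mk_surjective γ
  set m : ℕ → ℤ := fun n => round (den a n * g)
  have hnorm : ∀ n, ‖den a n • (g : UnitAddCircle)‖ = |den a n * g - m n| := fun n => by
    rw [← AddCircle.coe_zsmul, zsmul_eq_mul, UnitAddCircle.norm_eq]
  obtain ⟨N, hN⟩ := eventually_atTop.mp (H (1 / 5) (by norm_num))
  have hx : ∀ n ≥ N + 1, |den a n * g - m n| ≤ 1 / 5 := fun n hn => by
    obtain ⟨k, rfl⟩ : ∃ k, n = k + 1 := ⟨n - 1, by omega⟩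
    simpa [← hnorm] using hN k (by omega) 1 (one_le_quot ha k)
  have hAx : ∀ n ≥ N + 1, quot a n * |den a (n + 1) * g - m (n + 1)| ≤ 1 / 5 := fun n hn => by
    rw [← hnorm]
    refine UnitAddCircle.mul_norm_le_of_forall_norm_nsmul_le (by norm_num) fun j hj => ?_
    simpa [mul_zsmul] using hN n (by omega) j hj
  obtain ⟨k, l, hkl⟩ := exists_eq_den_num_of_recurrence (recurrence_of_abs_den_mul_sub_le hx hAx)
  have hd : g - k - l * a = 0 := by
    refine eq_zero_of_forall_abs_den_mul_le ha (C := 1 / 5 + |(l : ℝ)|) (N := N + 1) fun n hn => ?_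
    have : den a n * (g - k - l * a) = (den a n * g - m n) - l * err a n := by
      simp [err, hkl n hn]; ring
    rw [this]
    calc _ ≤ |den a n * g - m n| + |(l : ℝ)| * |err a n| := by rw [← abs_mul]; exact abs_sub _ _
      _ ≤ 1 / 5 + |(l : ℝ)| := by
        gcongr
        · exact hx n hn
        · exact mul_le_of_le_one_right (abs_nonneg _) (abs_err_le_one ha n)
  refine AddSubgroup.mem_zmultiples_iff.mpr ⟨l, ?_⟩
  rw [← AddCircle.coe_zsmul, zsmul_eq_mul, show g = l * a + k by linarith, AddCircle.coe_add]
  simp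

variable (a) in
noncomputable def approxSeq (b : ℝ) (x : Σ s : ℕ, Fin (quot a s + 1)) : ℤ :=
  round (b / err a x.1) * den a x.1 + x.2 * den a (x.1 + 1)

lemma norm_approxSeq_zsmul_sub_le (ha : Irrational a) (b : ℝ) (x : Σ s : ℕ, Fin (quot a s + 1)) :
    ‖approxSeq a b x • (a : UnitAddCircle) - b‖ ≤ 2 * |err a x.1| := by
  obtain ⟨s, j⟩ := x
  set R := round (b / err a s)
  have he := err_ne_zero ha s
  have hR : |R * err a s - b| ≤ |err a s| / 2 := by
    rw [show R * err a s - b = err a s * (R - b / err a s) by field_simp, abs_mul, abs_sub_comm]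
    linarith [mul_le_mul_of_nonneg_left (abs_sub_round (b / err a s)) (abs_nonneg (err a s))]
  have hj : (j : ℝ) * |err a (s + 1)| ≤ |err a s| :=
    (mul_le_mul_of_nonneg_right (by exact_mod_cast j.is_le) (abs_nonneg _)).trans
      (quot_mul_abs_err_succ_le ha s)
  have hcoe : approxSeq a b ⟨s, j⟩ • (a : UnitAddCircle) - b =
      ((R * err a s - b + j * err a (s + 1) : ℝ) : UnitAddCircle) := by
    rw [approxSeq, add_zsmul, mul_zsmul, mul_zsmul, den_zsmul_coe, den_zsmul_coe,
      ← AddCircle.coe_zsmul, ← AddCircle.coe_zsmul, ← AddCircle.coe_add, ← AddCircle.coe_sub]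
    congr 1; simp only [zsmul_eq_mul]; push_cast; ring
  rw [hcoe]
  refine QuotientAddGroup.norm_mk_le_norm.trans ?_
  rw [Real.norm_eq_abs]
  calc _ ≤ |R * err a s - b| + |(j : ℝ) * err a (s + 1)| := abs_add_le _ _
    _ ≤ 2 * |err a s| := by
      rw [abs_mul, Nat.abs_cast]; linarith [abs_nonneg (err a s)]

lemma tendsto_approxSeq_zsmul (ha : Irrational a) (b : ℝ) :
    Tendsto (fun x => approxSeq a b x • (a : UnitAddCircle)) cofinite (𝓝 (b : UnitAddCircle)) := by
  rw [← Sigma.comap_fst_cofinite, Nat.cofinite_eq_atTop, tendsto_iff_norm_sub_tendsto_zero]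
  refine squeeze_zero (fun _ => norm_nonneg _) (norm_approxSeq_zsmul_sub_le ha b) ?_
  simpa [Function.comp_def] using ((tendsto_err ha).abs.const_mul 2).comp tendsto_comap

lemma mem_zmultiples_of_tendsto_approxSeq_zsmul (ha : Irrational a) (b : ℝ) {γ l : UnitAddCircle}
    (h : Tendsto (fun x => approxSeq a b x • γ) cofinite (𝓝 l)) :
    γ ∈ AddSubgroup.zmultiples (a : UnitAddCircle) := by
  refine mem_zmultiples_of_forall_norm_zsmul_le ha γ fun ε hε => ?_
  rw [← Sigma.comap_fst_cofinite, Nat.cofinite_eq_atTop] at h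
  filter_upwards [eventually_comap.mp (h.eventually (Metric.ball_mem_nhds l (half_pos hε)))]
    with n hn j hj
  let x : Σ s : ℕ, Fin (quot a s + 1) := ⟨n, ⟨j, by omega⟩⟩
  have hdiff : (j * den a (n + 1) : ℤ) = approxSeq a b x - approxSeq a b ⟨n, 0⟩ := by
    simp [x, approxSeq]
  rw [hdiff, sub_zsmul, ← sub_eq_add_neg, ← dist_eq_norm]
  refine ((dist_triangle_right _ _ l).trans_lt ?_).le
  linarith [Metric.mem_ball.mp (hn x rfl), Metric.mem_ball.mp (hn ⟨n, 0⟩ rfl)]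

end GaussCF

section Independence

variable {a b : ℝ} (hab : LinearIndependent ℚ ![(1 : ℝ), a, b])
include hab

lemma eq_zero_of_zsmul_add_zsmul_eq_zero {m n : ℤ}
    (h : m • (a : UnitAddCircle) + n • (b : UnitAddCircle) = 0) : m = 0 ∧ n = 0 := by
  rw [← AddCircle.coe_zsmul, ← AddCircle.coe_zsmul, ← AddCircle.coe_add,
    AddCircle.coe_eq_zero_iff] at h
  obtain ⟨k, hk⟩ := h
  have := Fintype.linearIndependent_iff.mp hab ![-k, m, n] (by
    simp only [Fin.sum_univ_three, Matrix.cons_val, Rat.smul_def]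
    push_cast
    simp only [zsmul_eq_mul, mul_one] at hk
    linarith)
  exact ⟨by simpa using this 1, by simpa using this 2⟩

lemma irrational_of_linearIndependent : Irrational a := by
  rintro ⟨q, rfl⟩
  have h : (q.den : ℤ) • ((q : ℝ) : UnitAddCircle) + (0 : ℤ) • (b : UnitAddCircle) = 0 := by
    rw [zero_zsmul, add_zero, ← AddCircle.coe_zsmul, zsmul_eq_mul,
      show ((q.den : ℤ) : ℝ) * q = (q.num : ℤ) by exact_mod_cast Rat.den_mul_eq_num q]
    simp
  exact q.den_ne_zero (by exact_mod_cast (eq_zero_of_zsmul_add_zsmul_eq_zero hab h).1)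

lemma zmultiples_inf_zmultiples_eq_bot :
    AddSubgroup.zmultiples (b : UnitAddCircle) ⊓
      AddSubgroup.zmultiples (a : UnitAddCircle) = ⊥ := by
  rw [eq_bot_iff]
  rintro x ⟨⟨m, rfl⟩, ⟨n, hn⟩⟩
  have := (eq_zero_of_zsmul_add_zsmul_eq_zero hab (m := n) (n := -m)
    (by simp only at hn; rw [hn, neg_zsmul, add_neg_cancel])).2
  simp [neg_eq_zero.mp this]

end Independence

open GaussCF

/-- For `α = a + ℤ`, `β = b + ℤ` with `1, a, b` linearly independent over `ℚ`,
there is an integer sequence `(cₙ)` with `cₙα → β`, diverging at every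
`γ ∉ ⟨α⟩`; the cyclic groups `⟨β⟩` and `⟨α⟩` intersect trivially, and no
infinite subgroup `A ≤ 𝕋` satisfies `cₙγ → 0` for all `γ ∈ A`. -/
theorem counterexample_compactification_of_int
    (a b : ℝ) (hab : LinearIndependent ℚ ![(1:ℝ), a, b]) :
    ∃ c : ℕ → ℤ,
      Filter.Tendsto (fun n => c n • (a : AddCircle (1:ℝ))) Filter.atTop
        (nhds (b : AddCircle (1:ℝ))) ∧
      (∀ γ : AddCircle (1:ℝ), γ ∉ AddSubgroup.closure {(a : AddCircle (1:ℝ))} →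
        ¬ ∃ l : AddCircle (1:ℝ),
            Filter.Tendsto (fun n => c n • γ) Filter.atTop (nhds l)) ∧
      (AddSubgroup.closure {(b : AddCircle (1:ℝ))} ⊓
        AddSubgroup.closure {(a : AddCircle (1:ℝ))} = ⊥) ∧
      (∀ A : AddSubgroup (AddCircle (1:ℝ)),
        (∀ γ ∈ A, Filter.Tendsto (fun n => c n • γ) Filter.atTop (nhds 0)) →
        (A : Set (AddCircle (1:ℝ))).Finite) := by
  have ha : Irrational a := irrational_of_linearIndependent hab
  have hb : ∀ j : ℤ, j • (b : UnitAddCircle) = 0 → j = 0 := fun j hj =>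
    (eq_zero_of_zsmul_add_zsmul_eq_zero hab (m := 0) (by rwa [zero_zsmul, zero_add])).2
  obtain ⟨e⟩ := nonempty_equiv_of_countable (α := ℕ) (β := Σ s : ℕ, Fin (quot a s + 1))
  have he : Tendsto e atTop cofinite := Nat.cofinite_eq_atTop ▸ e.injective.tendsto_cofinite
  have he' : Tendsto e.symm cofinite atTop :=
    Nat.cofinite_eq_atTop ▸ e.symm.injective.tendsto_cofinite
  have hc := (tendsto_approxSeq_zsmul ha b).comp he
  have hmem : ∀ γ l : UnitAddCircle, Tendsto (fun n => approxSeq a b (e n) • γ) atTop (𝓝 l) →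
      γ ∈ AddSubgroup.zmultiples (a : UnitAddCircle) := fun γ l h =>
    mem_zmultiples_of_tendsto_approxSeq_zsmul ha b (l := l) <| by
      simpa [Function.comp_def] using h.comp he'
  simp only [← AddSubgroup.zmultiples_eq_closure]
  refine ⟨approxSeq a b ∘ e, hc, fun γ hγ ⟨l, hl⟩ => hγ (hmem γ l hl),
    zmultiples_inf_zmultiples_eq_bot hab, fun A hA => ?_⟩
  exact (Set.finite_singleton 0).subset fun γ hγ =>
    eq_zero_of_tendsto_zsmul hb hc (hmem γ 0 (hA γ hγ)) (hA γ hγ)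
end
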